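/- arXiv:math/0111027 — 2 statements merged into one kernel-verified Lean document; each statement's English description precedes it below -/
import Mathlib

section
/- Let H, K be Hilbert spaces, U a unitary on H ⊗ K, and suppose there exists a net (v_i) of unit vectors in H such that ‖U(v_i ⊗ ξ) − v_i ⊗ ξ‖ → 0 for every ξ ∈ K. Then there exists a state φ on B(H) such that for every ξ ∈ K, φ((ι ⊗ ω_ξ)(U)) = ‖ξ‖², where (ι ⊗ ω_ξ)(U) ∈ B(H) is the slice defined by ⟨(ι ⊗ ω_ξ)(U) v, w⟩ = ⟨U(v ⊗ ξ), w ⊗ ξ⟩. -/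
open scoped ComplexOrder

open Filter

private lemma inner_self_c {E : Type*} [NormedAddCommGroup E] [InnerProductSpace ℂ E]
    (x : E) : (inner ℂ x x : ℂ) = ((‖x‖ ^ 2 : ℝ) : ℂ) := by
  rw [inner_self_eq_norm_sq_to_K]; norm_cast

/-- If `U` is a unitary on (a realization `T` of) `H ⊗ K` and `(v_i)` is a
net of unit vectors in `H` with `‖U(v_i ⊗ ξ) − v_i ⊗ ξ‖ → 0` for every `ξ ∈ K`, then
there is a state `φ` on `B(H)` with `φ((ι ⊗ ω_ξ)(U)) = ‖ξ‖²` for every `ξ`, where the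
slice `(ι ⊗ ω_ξ)(U)` is characterized by `⟨(ι ⊗ ω_ξ)(U) v, w⟩ = ⟨U(v ⊗ ξ), w ⊗ ξ⟩`. -/
theorem almost_invariant_vectors_give_state
    {H K T : Type*}
    [NormedAddCommGroup H] [InnerProductSpace ℂ H] [CompleteSpace H]
    [NormedAddCommGroup K] [InnerProductSpace ℂ K] [CompleteSpace K]
    [NormedAddCommGroup T] [InnerProductSpace ℂ T] [CompleteSpace T]
    (p : H → K → T)
    (hp : ∀ (v w : H) (ξ η : K),
      (inner ℂ (p v ξ) (p w η) : ℂ) = (inner ℂ v w : ℂ) * (inner ℂ ξ η : ℂ))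
    (U : T ≃ₗᵢ[ℂ] T)
    (Sl : K → (H →L[ℂ] H))
    (hSl : ∀ (ξ : K) (v w : H),
      (inner ℂ (Sl ξ v) w : ℂ) = inner ℂ (U (p v ξ)) (p w ξ))
    (ι : Type*) (l : Filter ι) [l.NeBot]
    (v : ι → H) (hv : ∀ i, ‖v i‖ = 1)
    (hconv : ∀ ξ : K,
      Filter.Tendsto (fun i => ‖U (p (v i) ξ) - p (v i) ξ‖) l (nhds 0)) :
    ∃ φ : (H →L[ℂ] H) →ₗ[ℂ] ℂ,
      (∀ x, 0 ≤ φ (star x * x)) ∧ φ 1 = 1 ∧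
      ∀ ξ : K, φ (Sl ξ) = (‖ξ‖ : ℂ) ^ 2 := by
  classical
  set 𝒰 : Ultrafilter ι := Ultrafilter.of l with h𝒰def
  have h𝒰l : (𝒰 : Filter ι) ≤ l := Ultrafilter.of_le l
  set F : (H →L[ℂ] H) → ι → ℂ := fun x i => inner ℂ (v i) (x (v i)) with hF
  -- existence of limits
  have hex : ∀ x, ∃ c : ℂ, Tendsto (F x) 𝒰 (nhds c) := by
    intro x
    have hmem : ∀ i, F x i ∈ Metric.closedBall (0 : ℂ) ‖x‖ := by
      intro i
      simp only [Metric.mem_closedBall, dist_zero_right]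
      calc ‖F x i‖ ≤ ‖v i‖ * ‖x (v i)‖ := norm_inner_le_norm _ _
        _ = ‖x (v i)‖ := by rw [hv]; ring
        _ ≤ ‖x‖ * ‖v i‖ := x.le_opNorm _
        _ = ‖x‖ := by rw [hv]; ring
    have hle : (𝒰.map (F x) : Filter ℂ) ≤ Filter.principal (Metric.closedBall (0 : ℂ) ‖x‖) := by
      rw [Filter.le_principal_iff]
      exact Filter.mem_map.2 (Filter.univ_mem' hmem)
    obtain ⟨c, -, hc⟩ :=
      (isCompact_closedBall (0 : ℂ) ‖x‖).ultrafilter_le_nhds (𝒰.map (F x)) hle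
    exact ⟨c, hc⟩
  set φ0 : (H →L[ℂ] H) → ℂ := fun x => limUnder (𝒰 : Filter ι) (F x) with hφ0def
  have hφ0 : ∀ x, Tendsto (F x) 𝒰 (nhds (φ0 x)) := by
    intro x
    obtain ⟨c, hc⟩ := hex x
    have : φ0 x = c := hc.limUnder_eq
    rwa [this]
  refine ⟨{ toFun := φ0
            map_add' := ?_
            map_smul' := ?_ }, ?_, ?_, ?_⟩
  · intro x y
    refine tendsto_nhds_unique (hφ0 (x + y)) ?_
    have : F (x + y) = fun i => F x i + F y i := by
      funext i; simp [hF, inner_add_right]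
    rw [this]
    exact (hφ0 x).add (hφ0 y)
  · intro c x
    refine tendsto_nhds_unique (hφ0 (c • x)) ?_
    have : F (c • x) = fun i => c * F x i := by
      funext i; simp [hF, inner_smul_right]
    rw [this]
    exact (hφ0 x).const_mul c
  · -- positivity
    intro x
    have hval : ∀ i, F (star x * x) i = ((‖x (v i)‖ ^ 2 : ℝ) : ℂ) := by
      intro i
      simp only [hF, ContinuousLinearMap.mul_apply, ContinuousLinearMap.star_eq_adjoint,
        ContinuousLinearMap.adjoint_inner_right]
      exact inner_self_c _
    have him : (φ0 (star x * x)).im = 0 := by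
      have h1 : Tendsto (fun i => (F (star x * x) i).im) 𝒰 (nhds (φ0 (star x * x)).im) :=
        (Complex.continuous_im.tendsto _).comp (hφ0 _)
      have h2 : (fun i => (F (star x * x) i).im) = fun _ => (0 : ℝ) := by
        funext i; rw [hval i]; exact Complex.ofReal_im _
      rw [h2] at h1
      exact tendsto_nhds_unique h1 tendsto_const_nhds
    have hre : 0 ≤ (φ0 (star x * x)).re := by
      have h1 : Tendsto (fun i => (F (star x * x) i).re) 𝒰 (nhds (φ0 (star x * x)).re) :=
        (Complex.continuous_re.tendsto _).comp (hφ0 _)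
      refine ge_of_tendsto h1 (Filter.Eventually.of_forall fun i => ?_)
      rw [hval i, Complex.ofReal_re]; positivity
    rw [Complex.le_def]
    exact ⟨by simpa using hre, by simp [him]⟩
  · -- φ 1 = 1
    refine tendsto_nhds_unique (hφ0 1) ?_
    have : F 1 = fun _ => (1 : ℂ) := by
      funext i
      simp only [hF, ContinuousLinearMap.one_apply]
      rw [inner_self_c, hv]
      norm_num
    rw [this]; exact tendsto_const_nhds
  · -- slice values
    intro ξ
    have hwn : ∀ i, ‖p (v i) ξ‖ = ‖ξ‖ := by
      intro i
      have h1 : (inner ℂ (p (v i) ξ) (p (v i) ξ) : ℂ) = ((‖p (v i) ξ‖ ^ 2 : ℝ) : ℂ) :=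
        inner_self_c _
      have h1' : (inner ℂ (p (v i) ξ) (p (v i) ξ) : ℂ) = ((‖ξ‖ ^ 2 : ℝ) : ℂ) := by
        rw [hp, inner_self_c, inner_self_c, hv]
        norm_num
      have h2 : (‖p (v i) ξ‖ : ℝ) ^ 2 = (‖ξ‖ : ℝ) ^ 2 := by
        have := h1.symm.trans h1'
        exact_mod_cast this
      nlinarith [norm_nonneg (p (v i) ξ), norm_nonneg ξ]
    have hinner : ∀ i, (inner ℂ (U (p (v i) ξ)) (p (v i) ξ) : ℂ) - ((‖ξ‖ : ℂ)) ^ 2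
        = inner ℂ (U (p (v i) ξ) - p (v i) ξ) (p (v i) ξ) := by
      intro i
      rw [inner_sub_left, inner_self_c, hwn]
      norm_cast
    have hzero : Tendsto
        (fun i => (inner ℂ (U (p (v i) ξ)) (p (v i) ξ) : ℂ) - ((‖ξ‖ : ℂ)) ^ 2) l (nhds 0) := by
      refine squeeze_zero_norm (fun i => ?_) (by simpa using (hconv ξ).const_mul ‖ξ‖)
      rw [hinner i]
      calc ‖(inner ℂ (U (p (v i) ξ) - p (v i) ξ) (p (v i) ξ) : ℂ)‖
          ≤ ‖U (p (v i) ξ) - p (v i) ξ‖ * ‖p (v i) ξ‖ := norm_inner_le_norm _ _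
        _ = ‖ξ‖ * ‖U (p (v i) ξ) - p (v i) ξ‖ := by rw [hwn]; ring
    have htend : Tendsto (fun i => (inner ℂ (U (p (v i) ξ)) (p (v i) ξ) : ℂ)) l
        (nhds (((‖ξ‖ : ℂ)) ^ 2)) := by
      have := hzero.add_const (((‖ξ‖ : ℂ)) ^ 2)
      simpa using this
    refine tendsto_nhds_unique (hφ0 (Sl ξ)) ?_
    have hFeq : F (Sl ξ) = fun i => (inner ℂ (p (v i) ξ) (U (p (v i) ξ)) : ℂ) := by
      funext i
      rw [hF]
      simp only
      rw [← inner_conj_symm, hSl, inner_conj_symm]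
    rw [hFeq]
    have h2 : Tendsto (fun i => (inner ℂ (p (v i) ξ) (U (p (v i) ξ)) : ℂ)) l
        (nhds (((‖ξ‖ : ℂ)) ^ 2)) := by
      have h := ((Complex.continuous_conj.tendsto _).comp htend)
      simpa [Function.comp_def, ← Complex.ofReal_pow] using h
    exact h2.mono_left h𝒰l
end

section
/- Let H, K₁, K₂ be finite-dimensional Hilbert spaces, U ∈ B(H) ⊗ B(K₁) and V ∈ B(H) ⊗ B(K₂) unitaries, and M a state on B(K₁ ⊗ K₂) = B(K₁) ⊗ B(K₂) satisfying M((ω ⊗ ι ⊗ ι)((U×V)* (1 ⊗ x)(U×V))) = ω(1) M(x) for all x ∈ B(K₁ ⊗ K₂) and all linear functionals ω on B(H), where U×V := V₁₃ U₁₂. Then m(y) := M(y ⊗ 1_{K₂}) defines a state on B(K₁) satisfying m((ω ⊗ ι)(U*(1 ⊗ y)U)) = ω(1) m(y) for all y ∈ B(K₁) and all ω; i.e. if the tensor product corepresentation U×V is left-amenable, then U is left-amenable. -/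
/-!
`V₁₃` is unitary and commutes with `1 ⊗ y ⊗ 1`, so conjugating `1 ⊗ y ⊗ 1` by `V₁₃U₁₂` gives
`(U*(1 ⊗ y)U)₁₂`, whose slice by `ω` is `(ω ⊗ ι)(U*(1 ⊗ y)U) ⊗ 1`. Hence the invariance of `M`
at `x = y ⊗ 1` is exactly the invariance of `m` at `y`; positivity and normalisation of `m` are
inherited from `M`.
-/

open Kronecker
open scoped ComplexOrder

theorem star_mul_mul_mul_eq_of_commute {A : Type*} [Monoid A] [StarMul A] {t u v : A}
    (hv : star v * v = 1) (htv : Commute t v) : star (v * u) * t * (v * u) = star u * t * u := by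
  simp only [star_mul, mul_assoc]
  rw [← mul_assoc t, htv.eq, mul_assoc v, ← mul_assoc (star v), hv, one_mul]

namespace Matrix

section Ampliation

variable {R ι κ μ : Type*} [CommSemiring R] [StarRing R]
  [Fintype ι] [DecidableEq ι] [Fintype κ] [DecidableEq κ] [Fintype μ] [DecidableEq μ]

def ampliation (e : ι ≃ κ × μ) : Matrix κ κ R →⋆ₐ[R] Matrix ι ι R where
  toFun X := (X ⊗ₖ (1 : Matrix μ μ R)).submatrix e e
  map_one' := by rw [one_kronecker_one, submatrix_one_equiv]
  map_mul' X Y := by rw [submatrix_mul_equiv, ← mul_kronecker_mul, mul_one]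
  map_zero' := by rw [zero_kronecker, submatrix_zero]; rfl
  map_add' X Y := by rw [add_kronecker]; rfl
  commutes' r := by
    simp only [Algebra.algebraMap_eq_smul_one]
    rw [smul_kronecker, one_kronecker_one, ← submatrix_one_equiv e]
    rfl
  map_star' X := by
    simp only [star_eq_conjTranspose, conjTranspose_submatrix, conjTranspose_kronecker,
      conjTranspose_one]

theorem ampliation_apply (e : ι ≃ κ × μ) (X : Matrix κ κ R) :
    ampliation e X = (X ⊗ₖ (1 : Matrix μ μ R)).submatrix e e := rfl

end Ampliation

/-- The slice map `ω ⊗ ι`. -/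
def leftSlice {R α κ : Type*} [CommSemiring R] (ω : Matrix α α R →ₗ[R] R)
    (X : Matrix (α × κ) (α × κ) R) : Matrix κ κ R :=
  of fun k l => ω (of fun i j => X (i, k) (j, l))

def legOneThreeEquiv (α β γ : Type*) : α × (β × γ) ≃ (α × γ) × β :=
  ((Equiv.refl α).prodCongr (Equiv.prodComm β γ)).trans (Equiv.prodAssoc α γ β).symm

section Legs

variable {R α β γ : Type*} [CommSemiring R] [StarRing R]
  [Fintype α] [DecidableEq α] [Fintype β] [DecidableEq β] [Fintype γ] [DecidableEq γ]

def legOneTwo : Matrix (α × β) (α × β) R →⋆ₐ[R] Matrix (α × (β × γ)) (α × (β × γ)) R :=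
  ampliation (Equiv.prodAssoc α β γ).symm

def legOneThree : Matrix (α × γ) (α × γ) R →⋆ₐ[R] Matrix (α × (β × γ)) (α × (β × γ)) R :=
  ampliation (legOneThreeEquiv α β γ)

theorem legOneTwo_kronecker (A : Matrix α α R) (B : Matrix β β R) :
    legOneTwo (A ⊗ₖ B) = A ⊗ₖ (B ⊗ₖ (1 : Matrix γ γ R)) := by
  ext ⟨i, k, k'⟩ ⟨j, l, l'⟩
  simp [legOneTwo, ampliation_apply, mul_assoc]

theorem legOneThree_kronecker (A : Matrix α α R) (D : Matrix γ γ R) :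
    legOneThree (A ⊗ₖ D) = A ⊗ₖ ((1 : Matrix β β R) ⊗ₖ D) := by
  ext ⟨i, k, k'⟩ ⟨j, l, l'⟩
  simp only [legOneThree, legOneThreeEquiv, ampliation_apply, Equiv.coe_trans,
    Equiv.prodCongr_apply, Equiv.coe_refl, Equiv.coe_prodComm, submatrix_apply,
    Function.comp_apply, Prod.map_apply, id_eq, Prod.swap_prod_mk, Equiv.prodAssoc_symm_apply,
    kroneckerMap_apply]
  ring

theorem legOneTwo_sum_kronecker {ι : Type*} (s : Finset ι) (a : ι → Matrix α α R)
    (b : ι → Matrix β β R) :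
    legOneTwo (∑ p ∈ s, a p ⊗ₖ b p) = ∑ p ∈ s, a p ⊗ₖ (b p ⊗ₖ (1 : Matrix γ γ R)) := by
  simp only [map_sum, legOneTwo_kronecker]

theorem legOneThree_sum_kronecker {ι : Type*} (s : Finset ι) (c : ι → Matrix α α R)
    (d : ι → Matrix γ γ R) :
    legOneThree (∑ q ∈ s, c q ⊗ₖ d q) = ∑ q ∈ s, c q ⊗ₖ ((1 : Matrix β β R) ⊗ₖ d q) := by
  simp only [map_sum, legOneThree_kronecker]

theorem commute_one_kronecker_kronecker_one_legOneThree (y : Matrix β β R)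
    (X : Matrix (α × γ) (α × γ) R) :
    Commute ((1 : Matrix α α R) ⊗ₖ (y ⊗ₖ (1 : Matrix γ γ R))) (legOneThree X) := by
  have hy : (1 : Matrix α α R) ⊗ₖ (y ⊗ₖ (1 : Matrix γ γ R)) =
      ((1 : Matrix (α × γ) (α × γ) R) ⊗ₖ y).submatrix (legOneThreeEquiv α β γ)
        (legOneThreeEquiv α β γ) := by
    ext ⟨i, k, k'⟩ ⟨j, l, l'⟩
    simp [legOneThreeEquiv, one_apply, ← ite_and, and_comm]
  rw [hy, legOneThree, ampliation_apply, Commute, SemiconjBy, submatrix_mul_equiv,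
    submatrix_mul_equiv, ← mul_kronecker_mul, ← mul_kronecker_mul, one_mul, mul_one, mul_one,
    one_mul]

theorem leftSlice_legOneTwo (ω : Matrix α α R →ₗ[R] R) (X : Matrix (α × β) (α × β) R) :
    leftSlice ω (legOneTwo X : Matrix (α × (β × γ)) (α × (β × γ)) R) =
      leftSlice ω X ⊗ₖ (1 : Matrix γ γ R) := by
  ext ⟨k, k'⟩ ⟨l, l'⟩
  change ω (of fun i j => X (i, k) (j, l) * (1 : Matrix γ γ R) k' l') =
    ω (of fun i j => X (i, k) (j, l)) * (1 : Matrix γ γ R) k' l'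
  rw [mul_comm (ω _), ← smul_eq_mul, ← map_smul]
  congr 1
  ext i j
  exact mul_comm _ _

end Legs

end Matrix

theorem tensor_left_amenable_implies_left_amenable_general
    (m n₁ n₂ : ℕ) (ι κ : Type) [Fintype ι] [Fintype κ]
    (a : ι → Matrix (Fin m) (Fin m) ℂ) (b : ι → Matrix (Fin n₁) (Fin n₁) ℂ)
    (c : κ → Matrix (Fin m) (Fin m) ℂ) (d : κ → Matrix (Fin n₂) (Fin n₂) ℂ)
    (hV₁ : star (∑ q, c q ⊗ₖ d q) * (∑ q, c q ⊗ₖ d q) = 1)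
    (M : Matrix (Fin n₁ × Fin n₂) (Fin n₁ × Fin n₂) ℂ →ₗ[ℂ] ℂ)
    (hMpos : ∀ X, 0 ≤ M (star X * X))
    (hMone : M 1 = 1)
    (hMinv : ∀ (x : Matrix (Fin n₁ × Fin n₂) (Fin n₁ × Fin n₂) ℂ)
        (ω : Matrix (Fin m) (Fin m) ℂ →ₗ[ℂ] ℂ),
      M (Matrix.of fun k l =>
        ω (Matrix.of fun i j =>
          (star ((∑ q, c q ⊗ₖ ((1 : Matrix (Fin n₁) (Fin n₁) ℂ) ⊗ₖ d q)) *
                (∑ p, a p ⊗ₖ (b p ⊗ₖ (1 : Matrix (Fin n₂) (Fin n₂) ℂ)))) *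
            ((1 : Matrix (Fin m) (Fin m) ℂ) ⊗ₖ x) *
            ((∑ q, c q ⊗ₖ ((1 : Matrix (Fin n₁) (Fin n₁) ℂ) ⊗ₖ d q)) *
              (∑ p, a p ⊗ₖ (b p ⊗ₖ (1 : Matrix (Fin n₂) (Fin n₂) ℂ)))))
            (i, k) (j, l))) = ω 1 * M x) :
    (∀ y : Matrix (Fin n₁) (Fin n₁) ℂ,
      0 ≤ M ((star y * y) ⊗ₖ (1 : Matrix (Fin n₂) (Fin n₂) ℂ))) ∧
    M ((1 : Matrix (Fin n₁) (Fin n₁) ℂ) ⊗ₖ (1 : Matrix (Fin n₂) (Fin n₂) ℂ)) = 1 ∧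
    (∀ (y : Matrix (Fin n₁) (Fin n₁) ℂ) (ω : Matrix (Fin m) (Fin m) ℂ →ₗ[ℂ] ℂ),
      M ((Matrix.of fun k l =>
          ω (Matrix.of fun i j =>
            (star (∑ p, a p ⊗ₖ b p) *
              ((1 : Matrix (Fin m) (Fin m) ℂ) ⊗ₖ y) *
              (∑ p, a p ⊗ₖ b p)) (i, k) (j, l))) ⊗ₖ
          (1 : Matrix (Fin n₂) (Fin n₂) ℂ)) =
        ω 1 * M (y ⊗ₖ (1 : Matrix (Fin n₂) (Fin n₂) ℂ))) := by
  refine ⟨fun y => ?_, by rw [Matrix.one_kronecker_one]; exact hMone, fun y ω => ?_⟩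
  · have hy : star (y ⊗ₖ (1 : Matrix (Fin n₂) (Fin n₂) ℂ)) * (y ⊗ₖ 1) = (star y * y) ⊗ₖ 1 := by
      rw [Matrix.star_eq_conjTranspose, Matrix.conjTranspose_kronecker, Matrix.conjTranspose_one,
        ← Matrix.mul_kronecker_mul, one_mul, Matrix.star_eq_conjTranspose]
    exact hy ▸ hMpos _
  · have hV₁₃ : star (Matrix.legOneThree (β := Fin n₁) (∑ q, c q ⊗ₖ d q)) *
        Matrix.legOneThree (β := Fin n₁) (∑ q, c q ⊗ₖ d q) = 1 := by
      rw [← map_star, ← map_mul, hV₁, map_one]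
    have key := hMinv (y ⊗ₖ 1) ω
    rw [← Matrix.legOneThree_sum_kronecker, ← Matrix.legOneTwo_sum_kronecker,
      star_mul_mul_mul_eq_of_commute hV₁₃
        (Matrix.commute_one_kronecker_kronecker_one_legOneThree _ _),
      ← Matrix.legOneTwo_kronecker, ← map_star, ← map_mul, ← map_mul] at key
    change M (Matrix.leftSlice ω _) = _ at key
    rwa [Matrix.leftSlice_legOneTwo] at key

/-- If `M` is a left-invariant mean (a state) for the tensor product
corepresentation `U×V := V₁₃ U₁₂` of two unitaries `U = Σ a_p ⊗ b_p` and
`V = Σ c_q ⊗ d_q` (finite dimensions), then `m(y) := M(y ⊗ 1)` is a left-invariant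
mean (a state) for `U`; i.e. if `U×V` is left-amenable then `U` is left-amenable. -/
theorem tensor_left_amenable_implies_left_amenable
    (m n₁ n₂ : ℕ) (ι κ : Type) [Fintype ι] [Fintype κ]
    (a : ι → Matrix (Fin m) (Fin m) ℂ) (b : ι → Matrix (Fin n₁) (Fin n₁) ℂ)
    (c : κ → Matrix (Fin m) (Fin m) ℂ) (d : κ → Matrix (Fin n₂) (Fin n₂) ℂ)
    (hU₁ : star (∑ p, a p ⊗ₖ b p) * (∑ p, a p ⊗ₖ b p) = 1)
    (hU₂ : (∑ p, a p ⊗ₖ b p) * star (∑ p, a p ⊗ₖ b p) = 1)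
    (hV₁ : star (∑ q, c q ⊗ₖ d q) * (∑ q, c q ⊗ₖ d q) = 1)
    (hV₂ : (∑ q, c q ⊗ₖ d q) * star (∑ q, c q ⊗ₖ d q) = 1)
    (M : Matrix (Fin n₁ × Fin n₂) (Fin n₁ × Fin n₂) ℂ →ₗ[ℂ] ℂ)
    (hMpos : ∀ X, 0 ≤ M (star X * X))
    (hMone : M 1 = 1)
    (hMinv : ∀ (x : Matrix (Fin n₁ × Fin n₂) (Fin n₁ × Fin n₂) ℂ)
        (ω : Matrix (Fin m) (Fin m) ℂ →ₗ[ℂ] ℂ),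
      M (Matrix.of fun k l =>
        ω (Matrix.of fun i j =>
          (star ((∑ q, c q ⊗ₖ ((1 : Matrix (Fin n₁) (Fin n₁) ℂ) ⊗ₖ d q)) *
                (∑ p, a p ⊗ₖ (b p ⊗ₖ (1 : Matrix (Fin n₂) (Fin n₂) ℂ)))) *
            ((1 : Matrix (Fin m) (Fin m) ℂ) ⊗ₖ x) *
            ((∑ q, c q ⊗ₖ ((1 : Matrix (Fin n₁) (Fin n₁) ℂ) ⊗ₖ d q)) *
              (∑ p, a p ⊗ₖ (b p ⊗ₖ (1 : Matrix (Fin n₂) (Fin n₂) ℂ)))))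
            (i, k) (j, l))) = ω 1 * M x) :
    (∀ y : Matrix (Fin n₁) (Fin n₁) ℂ,
      0 ≤ M ((star y * y) ⊗ₖ (1 : Matrix (Fin n₂) (Fin n₂) ℂ))) ∧
    M ((1 : Matrix (Fin n₁) (Fin n₁) ℂ) ⊗ₖ (1 : Matrix (Fin n₂) (Fin n₂) ℂ)) = 1 ∧
    (∀ (y : Matrix (Fin n₁) (Fin n₁) ℂ) (ω : Matrix (Fin m) (Fin m) ℂ →ₗ[ℂ] ℂ),
      M ((Matrix.of fun k l =>
          ω (Matrix.of fun i j =>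
            (star (∑ p, a p ⊗ₖ b p) *
              ((1 : Matrix (Fin m) (Fin m) ℂ) ⊗ₖ y) *
              (∑ p, a p ⊗ₖ b p)) (i, k) (j, l))) ⊗ₖ
          (1 : Matrix (Fin n₂) (Fin n₂) ℂ)) =
        ω 1 * M (y ⊗ₖ (1 : Matrix (Fin n₂) (Fin n₂) ℂ))) :=
  tensor_left_amenable_implies_left_amenable_general m n₁ n₂ ι κ a b c d hV₁ M hMpos hMone hMinv
end
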